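/- arXiv:1811.09273 — 7 statements merged into one kernel-verified Lean document; each statement's English description precedes it below -/
import Mathlib

section
/- 8·arctan(1/10) − arctan(1/239) − 4·arctan(1/515) = π/4. -/
open Real

theorem stmt_4 : 8 * Real.arctan (1/10) - Real.arctan (1/239) - 4 * Real.arctan (1/515) = Real.pi / 4 := by
  have h1 : 2 * arctan (1/10) = arctan (20/99) := by
    rw [two_mul_arctan (by norm_num) (by norm_num)]; norm_num
  have h2 : 2 * arctan (20/99) = arctan (3960/9401) := by
    rw [two_mul_arctan (by norm_num) (by norm_num)]; norm_num
  have h3 : 2 * arctan (3960/9401) = arctan (74455920/72697201) := by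
    rw [two_mul_arctan (by norm_num) (by norm_num)]; norm_num
  have h4 : 2 * arctan (1/515) = arctan (515/132612) := by
    rw [two_mul_arctan (by norm_num) (by norm_num)]; norm_num
  have h5 : 2 * arctan (515/132612) = arctan (136590360/17585677319) := by
    rw [two_mul_arctan (by norm_num) (by norm_num)]; norm_num
  have h6 : arctan (1/239) + arctan (136590360/17585677319) = arctan (1758719/147153121) := by
    rw [arctan_add (by norm_num)]; norm_num
  have h7 : arctan (1758719/147153121) + arctan 1 = arctan (74455920/72697201) := by
    rw [arctan_add (by norm_num)]; norm_num
  rw [← arctan_one]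
  linarith
end

section
/- 12·arctan(1/18) + 8·arctan(1/57) − 5·arctan(1/239) = π/4. -/
open Real in
theorem stmt_5 : 12 * Real.arctan (1/18) + 8 * Real.arctan (1/57) - 5 * Real.arctan (1/239) = Real.pi / 4 := by
  have ha2 : arctan ((1:ℝ)/18) + arctan ((1:ℝ)/18) = arctan ((36:ℝ)/323) := by
    rw [arctan_add (by norm_num)]; norm_num
  have ha4 : arctan ((36:ℝ)/323) + arctan ((36:ℝ)/323) = arctan ((23256:ℝ)/103033) := by
    rw [arctan_add (by norm_num)]; norm_num
  have ha8 : arctan ((23256:ℝ)/103033) + arctan ((23256:ℝ)/103033) = arctan ((4792270896:ℝ)/10074957553) := by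
    rw [arctan_add (by norm_num)]; norm_num
  have ha12 : arctan ((4792270896:ℝ)/10074957553) + arctan ((23256:ℝ)/103033) = arctan ((728065260080136:ℝ)/926604049600873) := by
    rw [arctan_add (by norm_num)]; norm_num
  have hb2 : arctan ((1:ℝ)/57) + arctan ((1:ℝ)/57) = arctan ((57:ℝ)/1624) := by
    rw [arctan_add (by norm_num)]; norm_num
  have hb4 : arctan ((57:ℝ)/1624) + arctan ((57:ℝ)/1624) = arctan ((185136:ℝ)/2634127) := by
    rw [arctan_add (by norm_num)]; norm_num
  have hb8 : arctan ((185136:ℝ)/2634127) + arctan ((185136:ℝ)/2634127) = arctan ((975343472544:ℝ)/6904349713633) := by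
    rw [arctan_add (by norm_num)]; norm_num
  have hc2 : arctan ((1:ℝ)/239) + arctan ((1:ℝ)/239) = arctan ((239:ℝ)/28560) := by
    rw [arctan_add (by norm_num)]; norm_num
  have hc4 : arctan ((239:ℝ)/28560) + arctan ((239:ℝ)/28560) = arctan ((13651680:ℝ)/815616479) := by
    rw [arctan_add (by norm_num)]; norm_num
  have hc5 : arctan ((13651680:ℝ)/815616479) + arctan ((1:ℝ)/239) = arctan ((4078367999:ℝ)/194918686801) := by
    rw [arctan_add (by norm_num)]; norm_num
  have hs : arctan ((728065260080136:ℝ)/926604049600873) + arctan ((975343472544:ℝ)/6904349713633) = arctan ((99498527400:ℝ)/95420159401) := by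
    rw [arctan_add (by norm_num)]; norm_num
  have hf : arctan ((99498527400:ℝ)/95420159401) + arctan (-((4078367999:ℝ)/194918686801)) = arctan 1 := by
    rw [arctan_add (by norm_num)]; norm_num
  rw [show (5:ℝ) * arctan (1/239) = -(arctan (-((4078367999:ℝ)/194918686801))) by
        rw [arctan_neg]; push_cast [← hc5, ← hc4, ← hc2]; ring]
  rw [show (12:ℝ) * arctan (1/18) = arctan ((728065260080136:ℝ)/926604049600873) by
        push_cast [← ha12, ← ha8, ← ha4, ← ha2]; ring]
  rw [show (8:ℝ) * arctan (1/57) = arctan ((975343472544:ℝ)/6904349713633) by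
        push_cast [← hb8, ← hb4, ← hb2]; ring]
  rw [hs, sub_neg_eq_add, hf, arctan_one]
end

section
/- 5·arctan(1/2) + 2·arctan(1/53) + arctan(1/4443) = 3π/4. -/
open Real

theorem stmt_6 : 5 * Real.arctan (1/2) + 2 * Real.arctan (1/53) + Real.arctan (1/4443) = 3 * Real.pi / 4 := by
  have h2 : arctan (1/2) + arctan (1/2) = arctan (4/3) := by
    rw [arctan_add (by norm_num)]; norm_num
  have h4 : arctan (4/3) + arctan (4/3) = arctan (-(24/7)) + π := by
    rw [arctan_add_eq_add_pi (by norm_num) (by norm_num)]; norm_num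
  have h5 : arctan (-(24/7)) + arctan (1/2) = arctan (-(41/38)) := by
    rw [arctan_add (by norm_num)]; norm_num
  have hb : arctan (1/53) + arctan (1/53) = arctan (53/1404) := by
    rw [arctan_add (by norm_num)]; norm_num
  have hc : arctan (-(41/38)) + arctan (53/1404) = arctan (-(2222/2221)) := by
    rw [arctan_add (by norm_num)]; norm_num
  have hd : arctan (-(2222/2221)) + arctan (1/4443) = arctan (-1) := by
    rw [arctan_add (by norm_num)]; norm_num
  have hone : arctan (-1 : ℝ) = -(π/4) := by
    rw [arctan_neg, arctan_one]
  linarith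
end

section
/- 5·arctan(1/3) − 2·arctan(1/53) − arctan(1/4443) = π/2. -/
open Real

lemma h1 : arctan (1/3) + arctan (1/3) = arctan (3/4) := by
  rw [Real.arctan_add (by norm_num)]; norm_num

lemma h2 : arctan (3/4) + arctan (3/4) = arctan (24/7) := by
  rw [Real.arctan_add (by norm_num)]; norm_num

lemma h3 : arctan (24/7 : ℝ) = π/2 - arctan (7/24) := by
  rw [show (24/7 : ℝ) = (7/24)⁻¹ by norm_num, Real.arctan_inv_of_pos (by norm_num)]

lemma h4 : arctan (1/3) + arctan (-(7/24)) = arctan (3/79) := by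
  rw [Real.arctan_add (by norm_num)]; norm_num

lemma h5 : arctan (1/53) + arctan (1/53) = arctan (53/1404) := by
  rw [Real.arctan_add (by norm_num)]; norm_num

lemma h6 : arctan (53/1404) + arctan (1/4443) = arctan (3/79) := by
  rw [Real.arctan_add (by norm_num)]; norm_num

theorem stmt_7 : 5 * Real.arctan (1/3) - 2 * Real.arctan (1/53) - Real.arctan (1/4443) = Real.pi / 2 := by
  have n4 := Real.arctan_neg (7/24)
  have := h1; have := h2; have := h3; have := h4; have := h5; have := h6
  linarith
end

section
/- 5·arctan(1/7) + 4·arctan(1/53) + 2·arctan(1/4443) = π/4. -/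
open Real
theorem stmt_8 : 5 * Real.arctan (1/7) + 4 * Real.arctan (1/53) + 2 * Real.arctan (1/4443) = Real.pi / 4 := by
  have h1 : 2 * arctan (1/7) = arctan (7/24) := by
    rw [Real.two_mul_arctan (by norm_num) (by norm_num)]; norm_num
  have h2 : 2 * arctan (7/24) = arctan (336/527) := by
    rw [Real.two_mul_arctan (by norm_num) (by norm_num)]; norm_num
  have h3 : arctan (336/527) + arctan (1/7) = arctan (2879/3353) := by
    rw [Real.arctan_add (by norm_num)]; norm_num
  have h4 : 2 * arctan (1/53) = arctan (53/1404) := by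
    rw [Real.two_mul_arctan (by norm_num) (by norm_num)]; norm_num
  have h5 : 2 * arctan (53/1404) = arctan (148824/1968407) := by
    rw [Real.two_mul_arctan (by norm_num) (by norm_num)]; norm_num
  have h6 : 2 * arctan (1/4443) = arctan (4443/9870124) := by
    rw [Real.two_mul_arctan (by norm_num) (by norm_num)]; norm_num
  have h7 : arctan (2879/3353) + arctan (148824/1968407) = arctan (9865681/9874567) := by
    rw [Real.arctan_add (by norm_num)]; norm_num
  have h8 : arctan (9865681/9874567) + arctan (4443/9870124) = arctan 1 := by
    rw [Real.arctan_add (by norm_num)]; norm_num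
  have : 5 * arctan (1/7) + 4 * arctan (1/53) + 2 * arctan (1/4443)
      = (arctan (336/527) + arctan (1/7) + 2 * arctan (53/1404)) + 2 * arctan (1/4443) := by
    rw [← h4, ← h2, ← h1]; ring
  rw [this, h3, h5, h6, h7, h8, Real.arctan_one]
end

section
/- If x, y, z, a are integers with x² + 1 = a·y, then arctan(1/(a·z − x)) − arctan(1/(a·z + a − x)) = arctan(1/(a·z·(z+1) − (2z+1)·x + y)), provided all three denominators are nonzero. -/
theorem stmt_9 (x y z a : ℤ) (h : x^2 + 1 = a * y)
    (h1 : a * z - x ≠ 0) (h2 : a * z + a - x ≠ 0)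
    (h3 : a * z * (z + 1) - (2 * z + 1) * x + y ≠ 0) :
    Real.arctan (1 / (a * z - x : ℤ)) - Real.arctan (1 / (a * z + a - x : ℤ))
      = Real.arctan (1 / (a * z * (z + 1) - (2 * z + 1) * x + y : ℤ)) := by
  have ha : a ≠ 0 := by
    rintro rfl
    nlinarith [sq_nonneg x]
  set u : ℤ := a * z - x with hu
  set v : ℤ := a * z + a - x with hv
  set w : ℤ := a * z * (z + 1) - (2 * z + 1) * x + y with hw
  have key : u * v + 1 = a * w := by rw [hu, hv, hw]; linear_combination h
  have huv : u * v ≠ -1 := by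
    intro hc
    apply h3
    have : a * w = 0 := by omega
    exact (mul_eq_zero.mp this).resolve_left ha
  have hU : (u : ℝ) ≠ 0 := Int.cast_ne_zero.mpr h1
  have hV : (v : ℝ) ≠ 0 := Int.cast_ne_zero.mpr h2
  have hW : (w : ℝ) ≠ 0 := Int.cast_ne_zero.mpr h3
  have hcond : (1 / (u : ℝ)) * (-(1 / (v : ℝ))) < 1 := by
    rcases lt_or_gt_of_ne (mul_ne_zero h1 h2) with hneg | hpos
    · -- u*v < 0, so u*v ≤ -2
      have h2' : u * v ≤ -2 := by omega
      have hr : (u : ℝ) * v ≤ -2 := by exact_mod_cast h2'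
      have : (1 / (u : ℝ)) * (-(1 / (v : ℝ))) = 1 / (-((u : ℝ) * v)) := by
        field_simp
      rw [this]
      have hpos2 : (2 : ℝ) ≤ -((u : ℝ) * v) := by linarith
      calc 1 / (-((u : ℝ) * v)) ≤ 1 / 2 := by
            apply one_div_le_one_div_of_le <;> linarith
        _ < 1 := by norm_num
    · have hr : (0 : ℝ) < (u : ℝ) * v := by exact_mod_cast hpos
      have : (1 / (u : ℝ)) * (-(1 / (v : ℝ))) = -(1 / ((u : ℝ) * v)) := by
        field_simp
      rw [this]
      have : 0 < 1 / ((u : ℝ) * v) := by positivity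
      linarith
  have := Real.arctan_add hcond
  rw [Real.arctan_neg] at this
  rw [sub_eq_add_neg, this]
  congr 1
  have keyR : (u : ℝ) * v + 1 = a * w := by exact_mod_cast key
  have hvuR : (v : ℝ) - u = a := by push_cast [hu, hv]; ring
  have haR : (a : ℝ) ≠ 0 := Int.cast_ne_zero.mpr ha
  rw [div_eq_div_iff]
  · field_simp
    linear_combination (w : ℝ) * hvuR - keyR
  · intro hc
    have : (u : ℝ) * v + 1 = 0 := by
      field_simp at hc
      nlinarith [hc]
    rw [keyR] at this
    exact (mul_ne_zero haR hW) this
  · exact hW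
end

section
/- The equation x² + 1 = mᵗ has no solution in positive integers x, m, t with t > 1 and m > 1. -/
/-!
For even `t`, `x ^ 2 + 1` lies strictly between two consecutive squares. For odd `t = 2 s + 1`,
`x` is even, since otherwise `x ^ 2 + 1 ≡ 2 (mod 4)` would be a power of an even number. Then
`x + i` and `x - i` are coprime in `ℤ[i]`, and since every unit of `ℤ[i]` is a `t`-th power,
`x + i = (a + b i) ^ t`. Comparing imaginary parts gives `b = ±1` and
`∑ (-1) ^ (s - k) C(t, 2k) q ^ k = ±1` with `q = a ^ 2 ≡ 0 (mod 4)`. Modulo `4` the terms with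
`k ≥ 1` must cancel, which is impossible: the term `k = 1` has strictly smaller `2`-adic valuation
than each of the others.
-/

open Finset Zsqrtd

local notation "ℤ[i]" => GaussianInt

theorem sq_add_one_ne_sq {x : ℕ} (hx : 0 < x) (y : ℕ) : x ^ 2 + 1 ≠ y ^ 2 := fun h =>
  Nat.not_exists_sq' (m := x) (by omega) (by nlinarith) ⟨y, h.symm⟩

theorem even_of_sq_add_one_eq_pow {x m t : ℕ} (ht : 2 ≤ t) (h : x ^ 2 + 1 = m ^ t) :
    Even x := by
  by_contra hx
  obtain ⟨k, rfl⟩ := Nat.not_even_iff_odd.mp hx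
  have hm : Even m := (Nat.even_pow.mp (h ▸ (Odd.pow ⟨k, rfl⟩).add_one)).1
  have h4 : 4 ∣ (2 * k + 1) ^ 2 + 1 :=
    h ▸ (pow_dvd_pow_of_dvd (even_iff_two_dvd.mp hm) 2).trans (pow_dvd_pow m ht)
  ring_nf at h4
  omega

theorem factorization_two_choose_two_le {n r : ℕ} (hr : 1 ≤ r) (hrn : 2 * r ≤ n) :
    (n.choose 2).factorization 2 ≤ (n.choose (2 * r)).factorization 2 + r.factorization 2 := by
  have hchoose_ne : ∀ {a b : ℕ}, b ≤ a → a.choose b ≠ 0 := fun h => (Nat.choose_pos h).ne'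
  have hchoose : (2 * r).choose 2 = r * (2 * r - 1) := by
    rw [Nat.choose_two_right, mul_assoc, Nat.mul_div_cancel_left _ two_pos]
  have hodd : (2 * r - 1).factorization 2 = 0 := Nat.factorization_eq_zero_of_not_dvd (by omega)
  have h := congrArg (·.factorization 2) (Nat.choose_mul (n := n) (k := 2 * r) (s := 2) (by omega))
  rw [hchoose, Nat.factorization_mul (hchoose_ne hrn) (mul_ne_zero (by omega) (by omega)),
    Nat.factorization_mul (by omega) (by omega),
    Nat.factorization_mul (hchoose_ne (by omega)) (hchoose_ne (by omega))] at h
  simp only [Finsupp.coe_add, Pi.add_apply, hodd] at h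
  omega

theorem factorization_two_choose_two_mul_lt {n r q : ℕ} (hr : 2 ≤ r) (hrn : 2 * r ≤ n)
    (hq : 4 ∣ q) (hq0 : q ≠ 0) :
    (n.choose 2 * q).factorization 2 < (n.choose (2 * r) * q ^ r).factorization 2 := by
  have hq2 : 2 ≤ q.factorization 2 := (Nat.prime_two.pow_dvd_iff_le_factorization hq0).mp hq
  have hr2 : r.factorization 2 < r := Nat.lt_two_pow_self.trans_le (Nat.ordProj_le 2 (by omega))
  have := factorization_two_choose_two_le (by omega : 1 ≤ r) hrn
  rw [Nat.factorization_mul (Nat.choose_pos (by omega)).ne' hq0,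
    Nat.factorization_mul (Nat.choose_pos hrn).ne' (pow_ne_zero _ hq0), Nat.factorization_pow]
  simp only [Finsupp.coe_add, Pi.add_apply, Finsupp.coe_smul, Pi.smul_apply, smul_eq_mul]
  nlinarith

/-- `imPowPoly s (a ^ 2)` is the imaginary part of `(a + i) ^ (2 * s + 1)`. -/
def imPowPoly (s : ℕ) (q : ℤ) : ℤ :=
  ∑ k ∈ range (s + 1), (-1) ^ (s - k) * ((2 * s + 1).choose (2 * k) : ℤ) * q ^ k

theorem not_isUnit_imPowPoly {s q : ℕ} (hs : 1 ≤ s) (hq : 4 ∣ q) (hq0 : q ≠ 0) :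
    ¬ IsUnit (imPowPoly s q) := by
  obtain ⟨s, rfl⟩ : ∃ s', s = s' + 1 := ⟨s - 1, by omega⟩
  intro hunit
  set n := 2 * (s + 1) + 1
  set T : ℕ → ℤ := fun k => (-1) ^ (s + 1 - k) * ((n.choose (2 * k) * q ^ k : ℕ) : ℤ)
    with hT
  have hpoly : imPowPoly (s + 1) q = ∑ k ∈ range (s + 1), T (k + 1) + (-1) ^ (s + 1) := by
    simp [imPowPoly, sum_range_succ' _ (s + 1), hT, mul_assoc, n]
  have htail : ∑ k ∈ range (s + 1), T (k + 1) = 0 := by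
    have h4 : (4 : ℤ) ∣ ∑ k ∈ range (s + 1), T (k + 1) := dvd_sum fun k _ =>
      Dvd.dvd.mul_left (by exact_mod_cast hq.trans ((dvd_pow_self q k.succ_ne_zero).mul_left _)) _
    rcases Int.isUnit_iff.mp hunit with h | h <;>
      rcases neg_one_pow_eq_or ℤ (s + 1) with h' | h' <;> omega
  set v := (n.choose 2 * q).factorization 2
  have hhigh : (2 : ℤ) ^ (v + 1) ∣ ∑ k ∈ range s, T (k + 1 + 1) := by
    refine dvd_sum fun k hk => Dvd.dvd.mul_left ?_ _
    have hk : 2 * (k + 2) ≤ n := by have := mem_range.mp hk; omega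
    have h := (Nat.prime_two.pow_dvd_iff_le_factorization
      (mul_ne_zero (Nat.choose_pos hk).ne' (pow_ne_zero _ hq0))).mpr
      (factorization_two_choose_two_mul_lt (by omega) hk hq hq0)
    exact_mod_cast h
  have hlow : ¬ (2 : ℤ) ^ (v + 1) ∣ T 1 := by
    rw [hT, (isUnit_neg_one.pow _).dvd_mul_left, mul_one, pow_one]
    exact_mod_cast Nat.pow_succ_factorization_not_dvd
      (mul_ne_zero (Nat.choose_pos (by omega)).ne' hq0) Nat.prime_two
  rw [sum_range_succ'] at htail
  exact hlow ((dvd_neg.mpr hhigh).trans (by rw [eq_neg_of_add_eq_zero_right htail]))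

theorem Finset.sum_range_two_mul {M : Type*} [AddCommMonoid M] (f : ℕ → M) (n : ℕ) :
    ∑ k ∈ range (2 * n), f k = ∑ k ∈ range n, (f (2 * k) + f (2 * k + 1)) := by
  induction n with
  | zero => simp
  | succ n ih =>
    rw [mul_add, mul_one, sum_range_succ, sum_range_succ, sum_range_succ, ih, add_assoc]

theorem pow_pow_self_of_pow_four_eq_one {M : Type*} [Monoid M] {u : M} (hu : u ^ 4 = 1)
    {t : ℕ} (ht : Odd t) : (u ^ t) ^ t = u := by
  obtain ⟨k, rfl⟩ := ht
  rw [← pow_mul, show (2 * k + 1) * (2 * k + 1) = 4 * (k * k + k) + 1 by ring, pow_succ,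
    pow_mul, hu, one_pow, one_mul]

namespace GaussianInt

theorem im_pow_two_mul_add_one (w : ℤ[i]) (s : ℕ) :
    (w ^ (2 * s + 1)).im = ∑ k ∈ range (s + 1),
      (-1) ^ (s - k) * ((2 * s + 1).choose (2 * k) : ℤ) * w.re ^ (2 * k) *
        w.im ^ (2 * (s - k) + 1) := by
  set z : ℤ[i] := sqrtd * (w.im : ℤ[i])
  have hw : w = (w.re : ℤ[i]) + z := by ext <;> simp [z]
  have hz : z ^ 2 = ((-w.im ^ 2 : ℤ) : ℤ[i]) := by
    rw [mul_pow, sq sqrtd, dmuld]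
    push_cast
    ring
  have him_sum : ∀ (f : ℕ → ℤ[i]) (n : ℕ),
      (∑ k ∈ range n, f k).im = ∑ k ∈ range n, (f k).im :=
    fun f n => map_sum (AddMonoidHom.mk' Zsqrtd.im im_add) f _
  conv_lhs =>
    rw [hw, add_pow, show 2 * s + 1 + 1 = 2 * (s + 1) by ring, sum_range_two_mul, him_sum]
  refine sum_congr rfl fun k hk => ?_
  have hk : k ≤ s := Nat.lt_succ_iff.mp (mem_range.mp hk)
  have heven : (w.re : ℤ[i]) ^ (2 * k) * z ^ (2 * s + 1 - 2 * k) *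
      (((2 * s + 1).choose (2 * k) : ℕ) : ℤ[i]) =
      ((w.re ^ (2 * k) * (-w.im ^ 2) ^ (s - k) * w.im * (2 * s + 1).choose (2 * k) : ℤ) :
        ℤ[i]) * sqrtd := by
    rw [show 2 * s + 1 - 2 * k = 2 * (s - k) + 1 by omega, pow_succ, pow_mul z, hz]
    push_cast
    ring
  have hodd : (w.re : ℤ[i]) ^ (2 * k + 1) * z ^ (2 * s + 1 - (2 * k + 1)) *
      (((2 * s + 1).choose (2 * k + 1) : ℕ) : ℤ[i]) =
      ((w.re ^ (2 * k + 1) * (-w.im ^ 2) ^ (s - k) * (2 * s + 1).choose (2 * k + 1) : ℤ) :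
        ℤ[i]) := by
    rw [show 2 * s + 1 - (2 * k + 1) = 2 * (s - k) by omega, pow_mul z, hz]
    push_cast
    ring
  rw [heven, hodd, im_add]
  simp only [im_mul, re_intCast, im_intCast, re_sqrtd, im_sqrtd]
  rw [neg_pow, ← pow_mul]
  ring

theorem pow_four_eq_one_of_isUnit {u : ℤ[i]} (hu : IsUnit u) : u ^ 4 = 1 := by
  have hn : u.re * u.re + u.im * u.im = 1 := by
    have := (norm_eq_one_iff' (by norm_num) u).mpr hu
    rw [norm_def] at this
    linarith
  have hri : u.re * u.im = 0 := by
    have := mul_self_nonneg u.re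
    have := mul_self_nonneg u.im
    rcases (show u.re * u.re = 0 ∨ u.im * u.im = 0 by omega) with h | h <;>
      simp [mul_self_eq_zero.mp h]
  ext <;> simp only [pow_succ, pow_zero, one_mul, re_mul, im_mul, re_one, im_one]
  · linear_combination (u.re * u.re + u.im * u.im + 1) * hn - 8 * u.re * u.im * hri
  · linear_combination 4 * (u.re ^ 2 - u.im ^ 2) * hri

theorem exists_pow_eq_of_mul_eq_pow {a b c : ℤ[i]} (hab : IsCoprime a b) {t : ℕ} (ht : Odd t)
    (h : a * b = c ^ t) : ∃ w : ℤ[i], w ^ t = a := by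
  obtain ⟨d, u, hu⟩ := exists_associated_pow_of_mul_eq_pow' hab h
  refine ⟨d * (u : ℤ[i]) ^ t, ?_⟩
  rw [mul_pow, pow_pow_self_of_pow_four_eq_one (pow_four_eq_one_of_isUnit u.isUnit) ht, hu]

theorem isCoprime_star {z : ℤ[i]} (hz : IsCoprime z.re z.im) (hodd : Odd z.norm) :
    IsCoprime z (star z) := by
  refine IsRelPrime.isCoprime fun δ hδ hδ' => ?_
  obtain ⟨u, v, huv⟩ := hz
  have htwo : (2 : ℤ[i]) = (u : ℤ[i]) * (z + star z) - (v : ℤ[i]) * sqrtd * (z - star z) := by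
    ext
    · simp only [re_ofNat, re_sub, re_mul, im_mul, re_add, im_add, im_sub, re_star, im_star,
        re_intCast, im_intCast, re_sqrtd, im_sqrtd]
      linear_combination -2 * huv
    · simp [re_mul, im_mul]
  have hδ2 : δ.norm ∣ (2 : ℤ[i]).norm := map_dvd normMonoidHom
    (htwo ▸ dvd_sub ((hδ.add hδ').mul_left _) ((hδ.sub hδ').mul_left _))
  have hcop : IsCoprime z.norm 4 := (Int.isCoprime_two_right.mpr hodd).pow_right (n := 2)
  exact norm_eq_one_iff.mp (Int.isUnit_iff_natAbs_eq.mp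
    (hcop.isUnit_of_dvd' (map_dvd normMonoidHom hδ) (by simpa [norm_def] using hδ2)))

theorem pow_two_mul_add_one_ne_mk {x : ℤ} (hx0 : x ≠ 0) (hx : Even x) (w : ℤ[i]) {s : ℕ}
    (hs : 1 ≤ s) : w ^ (2 * s + 1) ≠ ⟨x, 1⟩ := by
  intro hw
  have him : (w ^ (2 * s + 1)).im = 1 := by rw [hw]
  rw [im_pow_two_mul_add_one] at him
  have hb : w.im ^ 2 = 1 := Int.isUnit_sq <| isUnit_of_dvd_one <|
    (dvd_sum fun k _ => (dvd_pow_self _ (by omega)).mul_left _).trans (dvd_of_eq him)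
  have hpoly : w.im * imPowPoly s (w.re ^ 2) = 1 := by
    refine Eq.trans ?_ him
    rw [imPowPoly, mul_sum]
    refine sum_congr rfl fun k _ => ?_
    rw [pow_succ w.im, pow_mul w.im, hb, one_pow, pow_mul w.re]
    ring
  have hnorm : (w.re ^ 2 + 1) ^ (2 * s + 1) = x ^ 2 + 1 := by
    have h := map_pow (normMonoidHom (d := -1)) w (2 * s + 1)
    change (w ^ (2 * s + 1)).norm = w.norm ^ (2 * s + 1) at h
    rw [hw, norm_def, norm_def] at h
    rw [show w.re ^ 2 + 1 = w.re * w.re - -1 * w.im * w.im by linear_combination -hb, ← h]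
    ring
  have hre : Even w.re := by
    by_contra h
    exact Int.not_even_iff_odd.mpr ((hx.pow_of_ne_zero two_ne_zero).add_one)
      (hnorm ▸ Int.even_pow.mpr ⟨(Int.not_even_iff_odd.mp h).pow.add_one, by omega⟩)
  have hre0 : w.re ≠ 0 := fun h => hx0 (by simpa [h] using hnorm)
  set q := w.re.natAbs ^ 2
  have hq : (q : ℤ) = w.re ^ 2 := by push_cast [q]; exact sq_abs _
  obtain ⟨c, hc⟩ := hre
  have hq4 : 4 ∣ q := Int.natCast_dvd_natCast.mp (hq ▸ ⟨c ^ 2, by rw [hc]; ring⟩)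
  have hq0 : q ≠ 0 := pow_ne_zero _ (Int.natAbs_ne_zero.mpr hre0)
  exact not_isUnit_imPowPoly hs hq4 hq0 (hq ▸ IsUnit.of_mul_eq_one_right _ hpoly)

end GaussianInt

theorem stmt_10_general (x m t : ℕ) (hx : 0 < x) (ht : 1 < t) :
    x^2 + 1 ≠ m^t := by
  intro h
  rcases Nat.even_or_odd t with ⟨u, rfl⟩ | ⟨s, rfl⟩
  · exact sq_add_one_ne_sq hx (m ^ u) (by rw [h, ← pow_mul, mul_two])
  have hxe : Even (x : ℤ) := (Int.even_coe_nat x).mpr (even_of_sq_add_one_eq_pow ht h)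
  have hnorm : (⟨x, 1⟩ : ℤ[i]).norm = ((m ^ (2 * s + 1) : ℕ) : ℤ) := by
    rw [norm_def, ← h]
    push_cast
    ring
  have hprod : (⟨x, 1⟩ : ℤ[i]) * star ⟨x, 1⟩ = (m : ℤ[i]) ^ (2 * s + 1) := by
    rw [← norm_eq_mul_conj, hnorm]
    push_cast
    rfl
  have hcop : IsCoprime (⟨x, 1⟩ : ℤ[i]) (star ⟨x, 1⟩) := GaussianInt.isCoprime_star
    isCoprime_one_right (by simpa [norm_def] using (hxe.mul_right x).add_one)
  obtain ⟨w, hw⟩ := GaussianInt.exists_pow_eq_of_mul_eq_pow hcop ⟨s, rfl⟩ hprod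
  exact GaussianInt.pow_two_mul_add_one_ne_mk (by exact_mod_cast hx.ne') hxe w (by omega) hw

theorem stmt_10 (x m t : ℕ) (hx : 0 < x) (hm : 1 < m) (ht : 1 < t) :
    x^2 + 1 ≠ m^t :=
  stmt_10_general x m t hx ht
end
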